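/- arXiv:math-ph/0011046 — 2 statements merged into one kernel-verified Lean document; each statement's English description precedes it below -/
import Mathlib

section
/- Let d ≥ 1 and let 0 < q₂ ≤ q₁ < d satisfy 2q₁ + q₂ > 2d. Then there is a constant C depending only on d, q₁, q₂ such that for all x, y ∈ ℤ^d, ∑_{u,v∈ℤ^d} (|u−v|+1)^{−q₁}(|y−u|+1)^{−q₂}(|x−v|+1)^{−q₁} ≤ C(|x−y|+1)^{−(2q₁+q₂−2d)}. -/
open scoped BigOperators ENNReal

/-- Points of `ℤ^d`. -/
abbrev V (d : ℕ) := Fin d → ℤ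

/-- The Euclidean norm of a point of `ℤ^d`. -/
noncomputable def znorm {d : ℕ} (x : V d) : ℝ :=
  Real.sqrt (∑ i, ((x i : ℝ)) ^ 2)

/-- The weight `|x| + 1`, as an extended nonnegative real. -/
noncomputable def w {d : ℕ} (x : V d) : ℝ≥0∞ := ENNReal.ofReal (znorm x + 1)

namespace Aux
variable {d : ℕ}

noncomputable def toE (x : V d) : EuclideanSpace ℝ (Fin d) := WithLp.toLp 2 (fun i => (x i : ℝ))

lemma znorm_eq (x : V d) : znorm x = ‖toE x‖ := by
  rw [EuclideanSpace.norm_eq]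
  simp [znorm, toE, sq_abs]

lemma znorm_nonneg (x : V d) : 0 ≤ znorm x := Real.sqrt_nonneg _

lemma znorm_neg (x : V d) : znorm (-x) = znorm x := by simp [znorm]

lemma toE_sub (x y : V d) : toE (x - y) = toE x - toE y := by
  ext i; simp [toE]

lemma znorm_triangle (x y : V d) : znorm (x - y) ≤ znorm x + znorm y := by
  rw [znorm_eq, znorm_eq, znorm_eq, toE_sub]
  exact norm_sub_le _ _

lemma znorm_triangle' (x y : V d) : znorm x ≤ znorm (x - y) + znorm y := by
  have h := znorm_triangle (x - y) (-y)
  rw [znorm_neg] at h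
  simpa using h

lemma coord_le (x : V d) (i : Fin d) : |(x i : ℝ)| ≤ znorm x := by
  rw [znorm, ← Real.sqrt_sq_eq_abs]
  exact Real.sqrt_le_sqrt (Finset.single_le_sum (fun j _ => sq_nonneg ((x j : ℝ))) (Finset.mem_univ i))

lemma rpow_anti {x y : ℝ≥0∞} (h : x ≤ y) {z : ℝ} (hz : z ≤ 0) : y ^ z ≤ x ^ z := by
  rw [show z = -(-z) by ring, ENNReal.rpow_neg x, ENNReal.rpow_neg y]
  exact ENNReal.inv_le_inv.2 (ENNReal.rpow_le_rpow h (by linarith))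

lemma one_le_w (x : V d) : 1 ≤ w x :=
  ENNReal.one_le_ofReal.2 (by linarith [znorm_nonneg x])

lemma w_ne_zero (x : V d) : w x ≠ 0 := by
  intro h; simpa [h] using one_le_w x

lemma w_ne_top (x : V d) : w x ≠ ⊤ := ENNReal.ofReal_ne_top

lemma w_neg (x : V d) : w (-x) = w x := by simp [w, znorm]

noncomputable def kap (u : V d) : ℕ := Nat.log 2 (⌊znorm u⌋₊ + 1)

lemma kap_le (u : V d) : (2:ℝ) ^ kap u ≤ znorm u + 1 := by
  have h1 : (2:ℕ) ^ kap u ≤ ⌊znorm u⌋₊ + 1 := Nat.pow_log_le_self 2 (by omega)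
  have h2 : (⌊znorm u⌋₊ : ℝ) ≤ znorm u := Nat.floor_le (znorm_nonneg u)
  calc (2:ℝ) ^ kap u = ((2:ℕ) ^ kap u : ℕ) := by push_cast; ring
  _ ≤ (⌊znorm u⌋₊ + 1 : ℕ) := by exact_mod_cast h1
  _ ≤ znorm u + 1 := by push_cast; linarith

lemma kap_lt (u : V d) : znorm u + 1 ≤ (2:ℝ) ^ (kap u + 1) := by
  have h1 : ⌊znorm u⌋₊ + 1 < 2 ^ (kap u + 1) := Nat.lt_pow_succ_log_self (by norm_num) _
  have h1' : (⌊znorm u⌋₊ : ℝ) + 2 ≤ 2 ^ (kap u + 1) := by exact_mod_cast Nat.succ_le_of_lt h1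
  have h2 : znorm u < ⌊znorm u⌋₊ + 1 := Nat.lt_floor_add_one _
  calc znorm u + 1 ≤ (⌊znorm u⌋₊ : ℝ) + 2 := by linarith
  _ ≤ _ := h1'

noncomputable def boxF (d k : ℕ) : Finset (V d) :=
  Fintype.piFinset fun _ => Finset.Icc (-(2 ^ (k + 1) : ℤ)) (2 ^ (k + 1))

lemma mem_boxF {u : V d} {k : ℕ} (h : kap u = k) : u ∈ boxF d k := by
  rw [boxF, Fintype.mem_piFinset]
  intro i
  rw [Finset.mem_Icc, ← abs_le]
  have h1 : |(u i : ℝ)| ≤ znorm u := coord_le u i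
  have h2 := kap_lt u
  rw [h] at h2
  have : |(u i : ℝ)| ≤ (2:ℝ) ^ (k + 1) := by
    have : (1:ℝ) ≤ 2 ^ (k+1) := one_le_pow₀ (by norm_num)
    linarith
  exact_mod_cast (by push_cast; exact this : |((u i : ℤ) : ℝ)| ≤ ((2 ^ (k+1) : ℤ) : ℝ))

lemma card_boxF (k : ℕ) : (boxF d k).card ≤ 2 ^ ((k + 3) * d) := by
  rw [boxF, Fintype.card_piFinset]
  have h : ∀ i : Fin d, (Finset.Icc (-(2 ^ (k + 1) : ℤ)) (2 ^ (k + 1))).card ≤ 2 ^ (k + 3) := by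
    intro i
    rw [Int.card_Icc]
    have : (2 ^ (k + 1) : ℤ) + 1 - -(2 ^ (k + 1)) = 2 ^ (k + 2) + 1 := by ring
    rw [this]
    have h2 : ((2:ℤ) ^ (k + 2) + 1).toNat = 2 ^ (k + 2) + 1 := by
      have : ((2:ℤ) ^ (k + 2) + 1) = ((2 ^ (k + 2) + 1 : ℕ) : ℤ) := by push_cast; ring
      rw [this, Int.toNat_natCast]
    rw [h2]
    have h3 : 1 ≤ 2 ^ (k+2) := Nat.one_le_two_pow
    calc 2 ^ (k + 2) + 1 ≤ 2 ^ (k + 2) + 2 ^ (k + 2) := by omega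
    _ = 2 ^ (k + 3) := by ring
  calc ∏ i : Fin d, (Finset.Icc (-(2 ^ (k + 1) : ℤ)) (2 ^ (k + 1))).card
      ≤ ∏ i : Fin d, 2 ^ (k + 3) := Finset.prod_le_prod (fun _ _ => Nat.zero_le _) (fun i _ => h i)
  _ = 2 ^ ((k + 3) * d) := by rw [Finset.prod_const, Finset.card_univ, Fintype.card_fin, ← pow_mul]

lemma tsum_kap_decomp (f : V d → ℝ≥0∞) :
    ∑' u, f u = ∑' k : ℕ, ∑' u : {u : V d // kap u = k}, f u := by
  rw [← (Equiv.sigmaFiberEquiv (kap (d := d))).tsum_eq f]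
  rw [ENNReal.tsum_sigma']
  rfl

lemma tsum_fiber_le (f : V d → ℝ≥0∞) (k : ℕ) (c : ℝ≥0∞)
    (hf : ∀ u, kap u = k → f u ≤ c) :
    ∑' u : {u : V d // kap u = k}, f u ≤ (2:ℝ≥0∞) ^ ((k + 3) * d) * c := by
  calc ∑' u : {u : V d // kap u = k}, f u
      = ∑' u : V d, Set.indicator {u | kap u = k} f u := (tsum_subtype _ f)
  _ ≤ ∑' u : V d, Set.indicator (boxF d k : Set (V d)) (fun _ => c) u := by
      apply ENNReal.tsum_le_tsum
      intro u
      by_cases h : kap u = k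
      · rw [Set.indicator_of_mem (by exact h), Set.indicator_of_mem (by exact_mod_cast mem_boxF h)]
        exact hf u h
      · rw [Set.indicator_of_notMem (by exact h)]
        exact zero_le
  _ = ∑ u ∈ boxF d k, c := by
      rw [tsum_eq_sum (s := boxF d k)]
      · exact Finset.sum_congr rfl fun u hu => Set.indicator_of_mem (by exact_mod_cast hu) _
      · intro u hu
        exact Set.indicator_of_notMem (by exact_mod_cast hu) _
  _ = (boxF d k).card * c := by rw [Finset.sum_const, nsmul_eq_mul]
  _ ≤ (2:ℝ≥0∞) ^ ((k + 3) * d) * c := by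
      apply mul_le_mul_left
      exact_mod_cast (Nat.cast_le (α := ℝ≥0∞)).2 (card_boxF k)

lemma two_rpow_ne_top {x : ℝ} : (2:ℝ≥0∞) ^ x ≠ ⊤ := by
  rcases le_or_gt 0 x with h|h
  · exact ENNReal.rpow_ne_top_of_nonneg h (by norm_num)
  · have h1 : (2:ℝ≥0∞)^x ≤ 1 := ENNReal.rpow_le_one_of_one_le_of_neg (by norm_num) h
    exact ne_top_of_le_ne_top ENNReal.one_ne_top h1

lemma two_rpow_add (x y : ℝ) : (2:ℝ≥0∞) ^ (x + y) = 2^x * 2^y :=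
  ENNReal.rpow_add x y (by norm_num) (by norm_num)

lemma ofReal_two_pow (k : ℕ) : ENNReal.ofReal ((2:ℝ)^k) = (2:ℝ≥0∞)^(k:ℝ) := by
  rw [ENNReal.ofReal_pow (by norm_num), ENNReal.rpow_natCast]
  norm_num

lemma shell_le (a : ℝ) (ha : 0 ≤ a) (f : V d → ℝ≥0∞) (k : ℕ)
    (hf : ∀ u, kap u = k → f u ≤ w u ^ (-a)) :
    ∑' u : {u : V d // kap u = k}, f u
      ≤ (2:ℝ≥0∞)^((3:ℝ)*d) * ((2:ℝ≥0∞)^((d:ℝ)-a))^k := by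
  have key : ∀ u : V d, kap u = k → f u ≤ (2:ℝ≥0∞)^(-((k:ℝ)*a)) := by
    intro u hu
    have h1 : ENNReal.ofReal ((2:ℝ)^k) ≤ w u := by
      apply ENNReal.ofReal_le_ofReal
      rw [← hu]; exact kap_le u
    calc f u ≤ w u ^ (-a) := hf u hu
    _ ≤ (ENNReal.ofReal ((2:ℝ)^k)) ^ (-a) := rpow_anti h1 (by linarith)
    _ = ((2:ℝ≥0∞)^((k:ℝ)))^(-a) := by rw [ofReal_two_pow]
    _ = (2:ℝ≥0∞)^(-((k:ℝ)*a)) := by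
        rw [← ENNReal.rpow_mul]; congr 1; ring
  calc ∑' u : {u : V d // kap u = k}, f u
      ≤ (2:ℝ≥0∞) ^ ((k + 3) * d) * (2:ℝ≥0∞)^(-((k:ℝ)*a)) := tsum_fiber_le f k _ key
  _ = (2:ℝ≥0∞) ^ ((((k + 3) * d : ℕ)):ℝ) * (2:ℝ≥0∞)^(-((k:ℝ)*a)) := by
      rw [ENNReal.rpow_natCast]
  _ = (2:ℝ≥0∞) ^ (((((k + 3) * d : ℕ)):ℝ) + (-((k:ℝ)*a))) := (two_rpow_add _ _).symm
  _ = (2:ℝ≥0∞) ^ ((3:ℝ)*d + ((d:ℝ)-a)*(k:ℕ)) := by congr 1; push_cast; ring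
  _ = (2:ℝ≥0∞) ^ ((3:ℝ)*d) * (2:ℝ≥0∞) ^ (((d:ℝ)-a)*(k:ℕ)) := two_rpow_add _ _
  _ = (2:ℝ≥0∞)^((3:ℝ)*d) * ((2:ℝ≥0∞)^((d:ℝ)-a))^k := by
      congr 1
      rw [ENNReal.rpow_mul, ENNReal.rpow_natCast]

lemma geom_le (q : ℝ≥0∞) (hq0 : q ≠ 0) (hqt : q ≠ ⊤) (K : ℕ) :
    ∑ k ∈ Finset.range (K+1), q ^ k ≤ q ^ K * (1 - q⁻¹)⁻¹ := by
  rw [← Finset.sum_range_reflect]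
  have step : ∀ j ∈ Finset.range (K+1), q ^ (K - j) ≤ q ^ K * (q⁻¹)^j := by
    intro j hj; rw [Finset.mem_range] at hj
    have hjK : j ≤ K := Nat.lt_succ_iff.mp hj
    have h : q ^ K = q ^ (K - j) * q ^ j := by rw [← pow_add]; congr 1; omega
    rw [h, mul_assoc, ← mul_pow, ENNReal.mul_inv_cancel hq0 hqt, one_pow, mul_one]
  calc ∑ j ∈ Finset.range (K+1), q ^ (K-j)
      ≤ ∑ j ∈ Finset.range (K+1), q^K * q⁻¹^j := Finset.sum_le_sum step
  _ = q^K * ∑ j ∈ Finset.range (K+1), q⁻¹^j := by rw [Finset.mul_sum]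
  _ ≤ q^K * ∑' j : ℕ, q⁻¹^j := mul_le_mul_right (ENNReal.sum_le_tsum _) _
  _ = q^K * (1 - q⁻¹)⁻¹ := by rw [ENNReal.tsum_geometric]

set_option maxHeartbeats 1000000 in

lemma ennreal_shift (f : ℕ → ℝ≥0∞) (n : ℕ) (h : ∀ k, k < n → f k = 0) :
    ∑' k, f k = ∑' k, f (k + n) := by
  refine (Function.Injective.tsum_eq (g := fun k => k + n) (fun a b hab => by simpa using hab) ?_).symm
  intro k hk
  rcases le_or_gt n k with h'|h'
  · exact ⟨k - n, by simp; omega⟩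
  · exact absurd (h k h') hk

lemma growth (a : ℝ) (ha : 0 < a) (had : a < d) :
    ∃ C : ℝ≥0∞, C ≠ ⊤ ∧ ∀ R : ℝ, 0 ≤ R →
      ∑' u : V d, Set.indicator {u : V d | znorm u ≤ R} (fun v => w v ^ (-a)) u
        ≤ C * ENNReal.ofReal (R + 1) ^ ((d:ℝ) - a) := by
  set q : ℝ≥0∞ := (2:ℝ≥0∞) ^ ((d:ℝ) - a) with hq
  have hq1 : 1 < q := ENNReal.one_lt_rpow (by norm_num) (by linarith)
  have hqt : q ≠ ⊤ := two_rpow_ne_top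
  have hq0 : q ≠ 0 := (zero_lt_one.trans hq1).ne'
  have hgeom : (1 - q⁻¹)⁻¹ ≠ ⊤ := by
    rw [Ne, ENNReal.inv_eq_top]
    intro h
    have h1 : (1:ℝ≥0∞) ≤ q⁻¹ := tsub_eq_zero_iff_le.1 h
    have h2 : q⁻¹ < 1 := ENNReal.inv_lt_one.2 hq1
    exact absurd h1 h2.not_ge
  refine ⟨(2:ℝ≥0∞)^((3:ℝ)*d) * (1 - q⁻¹)⁻¹, ENNReal.mul_ne_top two_rpow_ne_top hgeom, ?_⟩
  intro R hR
  set K := Nat.log 2 ⌊R+1⌋₊ with hK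
  have hfl : 1 ≤ ⌊R+1⌋₊ := Nat.le_floor (by push_cast; linarith)
  rw [tsum_kap_decomp]
  have hzero : ∀ k, K < k →
      (∑' u : {u : V d // kap u = k},
        Set.indicator {u : V d | znorm u ≤ R} (fun v => w v ^ (-a)) (u : V d)) = 0 := by
    intro k hk
    rw [ENNReal.tsum_eq_zero]
    rintro ⟨u, hu⟩
    apply Set.indicator_of_notMem
    intro hmem
    have hmem' : znorm u ≤ R := hmem
    have h1 : (2:ℝ)^k ≤ R + 1 := by
      have := kap_le u
      rw [hu] at this
      linarith
    have h2 : (2:ℕ)^k ≤ ⌊R+1⌋₊ := Nat.le_floor (by exact_mod_cast h1)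
    have h3 : k ≤ K := (Nat.le_log_iff_pow_le (by norm_num) (by omega)).2 h2
    omega
  have hle : ∀ k : ℕ,
      (∑' u : {u : V d // kap u = k},
        Set.indicator {u : V d | znorm u ≤ R} (fun v => w v ^ (-a)) (u : V d))
      ≤ (if k ≤ K then (2:ℝ≥0∞)^((3:ℝ)*d) * q^k else 0) := by
    intro k
    by_cases hk : k ≤ K
    · rw [if_pos hk]
      exact shell_le a ha.le _ k (fun u _ => Set.indicator_le_self _ _ u)
    · rw [if_neg hk]
      exact le_of_eq (hzero k (by omega))
  calc (∑' k : ℕ, ∑' u : {u : V d // kap u = k},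
        Set.indicator {u : V d | znorm u ≤ R} (fun v => w v ^ (-a)) (u : V d))
      ≤ ∑' k : ℕ, (if k ≤ K then (2:ℝ≥0∞)^((3:ℝ)*d) * q^k else 0) :=
        ENNReal.tsum_le_tsum hle
  _ = ∑ k ∈ Finset.range (K+1), (if k ≤ K then (2:ℝ≥0∞)^((3:ℝ)*d) * q^k else 0) := by
      apply tsum_eq_sum
      intro k hk
      rw [Finset.mem_range] at hk
      exact if_neg (by omega)
  _ ≤ ∑ k ∈ Finset.range (K+1), (2:ℝ≥0∞)^((3:ℝ)*d) * q^k :=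
      Finset.sum_le_sum (fun k _ => by split_ifs <;> simp)
  _ = (2:ℝ≥0∞)^((3:ℝ)*d) * ∑ k ∈ Finset.range (K+1), q^k := by rw [Finset.mul_sum]
  _ ≤ (2:ℝ≥0∞)^((3:ℝ)*d) * (q^K * (1-q⁻¹)⁻¹) := mul_le_mul_right (geom_le q hq0 hqt K) _
  _ ≤ (2:ℝ≥0∞)^((3:ℝ)*d) * (ENNReal.ofReal (R+1) ^ ((d:ℝ)-a) * (1-q⁻¹)⁻¹) := by
      apply mul_le_mul_right
      apply mul_le_mul_left
      have h2K : ((2:ℝ))^K ≤ R+1 := by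
        have h := Nat.pow_log_le_self 2 (show ⌊R+1⌋₊ ≠ 0 by omega)
        calc ((2:ℝ))^K = (((2:ℕ)^K : ℕ):ℝ) := by push_cast; ring
        _ ≤ (⌊R+1⌋₊ : ℝ) := by exact_mod_cast h
        _ ≤ R+1 := Nat.floor_le (by linarith)
      have hb : (2:ℝ≥0∞)^(K:ℝ) ≤ ENNReal.ofReal (R+1) := by
        rw [← ofReal_two_pow]; exact ENNReal.ofReal_le_ofReal h2K
      calc q^K = ((2:ℝ≥0∞)^((K:ℕ):ℝ))^((d:ℝ)-a) := by
            rw [← ENNReal.rpow_natCast q K, hq, ← ENNReal.rpow_mul, ← ENNReal.rpow_mul,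
              mul_comm]
      _ ≤ ENNReal.ofReal (R+1) ^ ((d:ℝ)-a) := ENNReal.rpow_le_rpow hb (by linarith)
  _ = (2:ℝ≥0∞)^((3:ℝ)*d) * (1-q⁻¹)⁻¹ * ENNReal.ofReal (R+1) ^ ((d:ℝ)-a) := by ring

set_option maxHeartbeats 1000000 in
lemma tail (s : ℝ) (hs : (d:ℝ) < s) :
    ∃ C : ℝ≥0∞, C ≠ ⊤ ∧ ∀ R : ℝ, 0 ≤ R →
      ∑' u : V d, Set.indicator {u : V d | R ≤ znorm u} (fun v => w v ^ (-s)) u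
        ≤ C * ENNReal.ofReal (R + 1) ^ ((d:ℝ) - s) := by
  set q : ℝ≥0∞ := (2:ℝ≥0∞) ^ ((d:ℝ) - s) with hq
  have hq1 : q < 1 := ENNReal.rpow_lt_one_of_one_lt_of_neg (by norm_num) (by linarith)
  have hgeom : (1 - q)⁻¹ ≠ ⊤ := by
    rw [Ne, ENNReal.inv_eq_top]
    intro h
    exact absurd (tsub_eq_zero_iff_le.1 h) hq1.not_ge
  have hs0 : 0 < s := lt_of_le_of_lt (Nat.cast_nonneg d) hs
  refine ⟨(2:ℝ≥0∞)^((3:ℝ)*d) * (2:ℝ≥0∞)^((2:ℝ)*(s-(d:ℝ))) * (1 - q)⁻¹,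
    ENNReal.mul_ne_top (ENNReal.mul_ne_top two_rpow_ne_top two_rpow_ne_top) hgeom, ?_⟩
  intro R hR
  set K := Nat.log 2 ⌊R+1⌋₊ with hK
  have hfl : 1 ≤ ⌊R+1⌋₊ := Nat.le_floor (by push_cast; linarith)
  rw [tsum_kap_decomp]
  set F : ℕ → ℝ≥0∞ := fun k => ∑' u : {u : V d // kap u = k},
      Set.indicator {u : V d | R ≤ znorm u} (fun v => w v ^ (-s)) (u : V d) with hF
  have hzero : ∀ k, k + 1 < K → F k = 0 := by
    intro k hk
    rw [hF, ENNReal.tsum_eq_zero]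
    rintro ⟨u, hu⟩
    apply Set.indicator_of_notMem
    intro hmem
    have hmem' : R ≤ znorm u := hmem
    have h1 : znorm u + 1 ≤ (2:ℝ)^(k+1) := by
      have := kap_lt u
      rwa [hu] at this
    have h2 : ((2:ℕ)^K : ℝ) ≤ R + 1 := by
      have h := Nat.pow_log_le_self 2 (show ⌊R+1⌋₊ ≠ 0 by omega)
      calc ((2:ℕ)^K : ℝ) ≤ (⌊R+1⌋₊ : ℝ) := by exact_mod_cast h
      _ ≤ R+1 := Nat.floor_le (by linarith)
    have h3 : (2:ℝ)^K ≤ (2:ℝ)^(k+1) := by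
      push_cast at h2
      linarith
    have h4 : K ≤ k + 1 := by
      have := (pow_le_pow_iff_right₀ (a := (2:ℝ)) (by norm_num)).1 h3
      exact this
    omega
  have hshell : ∀ k : ℕ, F k ≤ (2:ℝ≥0∞)^((3:ℝ)*d) * q^k := fun k =>
    shell_le s hs0.le _ k (fun u _ => Set.indicator_le_self _ _ u)
  calc ∑' k : ℕ, F k
      = ∑' k : ℕ, F (k + (K-1)) := ennreal_shift F (K-1) (fun k hk => hzero k (by omega))
  _ ≤ ∑' k : ℕ, (2:ℝ≥0∞)^((3:ℝ)*d) * q^(K-1) * q^k := by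
      apply ENNReal.tsum_le_tsum
      intro k
      calc F (k + (K-1)) ≤ (2:ℝ≥0∞)^((3:ℝ)*d) * q^(k + (K-1)) := hshell _
      _ = (2:ℝ≥0∞)^((3:ℝ)*d) * q^(K-1) * q^k := by rw [pow_add]; ring
  _ = (2:ℝ≥0∞)^((3:ℝ)*d) * q^(K-1) * (1-q)⁻¹ := by
      rw [ENNReal.tsum_mul_left, ENNReal.tsum_geometric]
  _ ≤ (2:ℝ≥0∞)^((3:ℝ)*d) * ((2:ℝ≥0∞)^((2:ℝ)*(s-(d:ℝ))) * ENNReal.ofReal (R+1) ^ ((d:ℝ)-s)) * (1-q)⁻¹ := by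
      apply mul_le_mul_left
      apply mul_le_mul_right
      -- q^(K-1) ≤ 2^(2(s-d)) * ofReal(R+1)^(d-s)
      have hRle : R + 1 ≤ (2:ℝ)^((K-1) + 2) := by
        have h1 : ⌊R+1⌋₊ < 2 ^ (K + 1) := Nat.lt_pow_succ_log_self (by norm_num) _
        have h2 : (⌊R+1⌋₊ : ℝ) + 1 ≤ ((2:ℕ) ^ (K+1) : ℝ) := by exact_mod_cast Nat.succ_le_of_lt h1
        have h3 : R + 1 < (⌊R+1⌋₊ : ℝ) + 1 := by
          have := Nat.lt_floor_add_one (R+1)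
          linarith
        have h4 : ((2:ℕ) ^ (K+1) : ℝ) ≤ (2:ℝ)^((K-1)+2) := by
          push_cast
          exact pow_le_pow_right₀ (by norm_num) (by omega)
        linarith
      have hb : ENNReal.ofReal (R+1) ≤ (2:ℝ≥0∞)^((((K-1)+2 : ℕ)):ℝ) := by
        rw [← ofReal_two_pow]
        exact ENNReal.ofReal_le_ofReal hRle
      have step1 : ((2:ℝ≥0∞)^((((K-1)+2 : ℕ)):ℝ))^((d:ℝ)-s) ≤ ENNReal.ofReal (R+1) ^ ((d:ℝ)-s) := by
        apply rpow_anti hb (by linarith)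
      calc q^(K-1) = (2:ℝ≥0∞)^(((K-1:ℕ):ℝ)*((d:ℝ)-s)) := by
            rw [← ENNReal.rpow_natCast q (K-1), hq, ← ENNReal.rpow_mul, mul_comm]
      _ = (2:ℝ≥0∞)^((2:ℝ)*(s-(d:ℝ)) + ((((K-1)+2:ℕ)):ℝ)*((d:ℝ)-s)) := by
            congr 1; push_cast; ring
      _ = (2:ℝ≥0∞)^((2:ℝ)*(s-(d:ℝ))) * ((2:ℝ≥0∞)^((((K-1)+2:ℕ)):ℝ))^((d:ℝ)-s) := by
            rw [two_rpow_add]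
            congr 1
            rw [← ENNReal.rpow_mul]
      _ ≤ (2:ℝ≥0∞)^((2:ℝ)*(s-(d:ℝ))) * ENNReal.ofReal (R+1) ^ ((d:ℝ)-s) :=
            mul_le_mul_right step1 _
  _ = (2:ℝ≥0∞)^((3:ℝ)*d) * (2:ℝ≥0∞)^((2:ℝ)*(s-(d:ℝ))) * (1 - q)⁻¹ * ENNReal.ofReal (R+1) ^ ((d:ℝ)-s) := by
      ring


lemma w_mono {x y : V d} (h : znorm x ≤ znorm y) : w x ≤ w y :=
  ENNReal.ofReal_le_ofReal (by linarith)

lemma w_rpow_mul (x : V d) (e e' : ℝ) : w x ^ e * w x ^ e' = w x ^ (e + e') :=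
  (ENNReal.rpow_add _ _ (w_ne_zero x) (w_ne_top x)).symm

lemma half_rpow (x : ℝ≥0∞) (hx : x ≠ ⊤) (e : ℝ) : (x / 2) ^ e = x ^ e * 2 ^ (-e) := by
  rw [div_eq_mul_inv, ENNReal.mul_rpow_of_ne_top hx (by norm_num), ← ENNReal.rpow_neg_one 2,
    ← ENNReal.rpow_mul]
  norm_num

lemma tsum_sub_left (z : V d) (g : V d → ℝ≥0∞) : ∑' u, g (z - u) = ∑' u, g u :=
  (Equiv.subLeft z).tsum_eq g

lemma half_bound {z u : V d} (h : znorm u ≤ znorm z / 2) {b : ℝ} (hb : 0 ≤ b) :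
    w (z - u) ^ (-b) ≤ (2:ℝ≥0∞) ^ b * w z ^ (-b) := by
  have h1 : znorm z ≤ znorm (z - u) + znorm u := znorm_triangle' z u
  have h3 : w z ≤ 2 * w (z - u) := by
    rw [show w z = ENNReal.ofReal (znorm z + 1) from rfl,
      show w (z-u) = ENNReal.ofReal (znorm (z-u) + 1) from rfl]
    calc ENNReal.ofReal (znorm z + 1) ≤ ENNReal.ofReal (2 * (znorm (z-u) + 1)) :=
          ENNReal.ofReal_le_ofReal (by linarith [znorm_nonneg z])
    _ = 2 * ENNReal.ofReal (znorm (z-u) + 1) := by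
        rw [ENNReal.ofReal_mul (by norm_num)]; norm_num
  have h4 : w z / 2 ≤ w (z - u) :=
    ENNReal.div_le_of_le_mul (by rwa [mul_comm] at h3)
  calc w (z - u) ^ (-b) ≤ (w z / 2) ^ (-b) := rpow_anti h4 (by linarith)
  _ = w z ^ (-b) * 2 ^ b := by rw [half_rpow _ (w_ne_top z)]; norm_num
  _ = (2:ℝ≥0∞) ^ b * w z ^ (-b) := mul_comm _ _

lemma conv (a b : ℝ) (ha : 0 < a) (hb : 0 < b) (had : a < d) (hbd : b < d)
    (hab : (d:ℝ) < a + b) :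
    ∃ C : ℝ≥0∞, C ≠ ⊤ ∧ ∀ z : V d,
      ∑' u : V d, w u ^ (-a) * w (z - u) ^ (-b) ≤ C * w z ^ (-(a + b - (d:ℝ))) := by
  obtain ⟨Ca, hCa, HA⟩ := growth (d := d) a ha had
  obtain ⟨Cb, hCb, HB⟩ := growth (d := d) b hb hbd
  obtain ⟨Ct, hCt, HT⟩ := tail (d := d) (a+b) hab
  refine ⟨(2:ℝ≥0∞)^b * Ca + (2:ℝ≥0∞)^a * Cb
      + (2:ℝ≥0∞)^(a+b-(d:ℝ)) * Ct + (2:ℝ≥0∞)^(a+b-(d:ℝ)) * Ct, ?_, ?_⟩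
  · refine ENNReal.add_ne_top.2 ⟨ENNReal.add_ne_top.2 ⟨ENNReal.add_ne_top.2 ⟨?_, ?_⟩, ?_⟩, ?_⟩
    · exact ENNReal.mul_ne_top two_rpow_ne_top hCa
    · exact ENNReal.mul_ne_top two_rpow_ne_top hCb
    · exact ENNReal.mul_ne_top two_rpow_ne_top hCt
    · exact ENNReal.mul_ne_top two_rpow_ne_top hCt
  intro z
  set R := znorm z with hRdef
  have hR : 0 ≤ R := znorm_nonneg z
  have hR2 : 0 ≤ R / 2 := by linarith
  set f : V d → ℝ≥0∞ := fun u => w u ^ (-a) * w (z - u) ^ (-b) with hf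
  set E : ℝ≥0∞ := w z ^ (-(a + b - (d:ℝ))) with hE
  set SA : Set (V d) := {u | znorm u ≤ R/2} with hSA
  set SB : Set (V d) := {u | znorm (z - u) ≤ R/2} with hSB
  set SC1 : Set (V d) := {u | R/2 ≤ znorm (z - u) ∧ znorm (z - u) ≤ znorm u} with hSC1
  set SC2 : Set (V d) := {u | R/2 ≤ znorm u ∧ znorm u ≤ znorm (z - u)} with hSC2
  set T : V d → ℝ≥0∞ := Set.indicator {v : V d | R/2 ≤ znorm v} (fun v => w v ^ (-(a+b))) with hT
  -- pointwise cover
  have hcover : ∀ u, f u ≤ Set.indicator SA f u + Set.indicator SB f u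
      + Set.indicator SC1 f u + Set.indicator SC2 f u := by
    intro u
    rcases le_or_gt (znorm u) (R/2) with h1|h1
    · rw [Set.indicator_of_mem (show u ∈ SA from h1)]
      exact le_add_right (le_add_right (le_add_right (le_refl _)))
    rcases le_or_gt (znorm (z - u)) (R/2) with h2|h2
    · rw [Set.indicator_of_mem (show u ∈ SB from h2)]
      exact le_add_right (le_add_right (le_add_left (le_refl _)))
    rcases le_total (znorm (z - u)) (znorm u) with h3|h3
    · rw [Set.indicator_of_mem (show u ∈ SC1 from ⟨h2.le, h3⟩)]
      exact le_add_right (le_add_left (le_refl _))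
    · rw [Set.indicator_of_mem (show u ∈ SC2 from ⟨h1.le, h3⟩)]
      exact le_add_left (le_refl _)
  have hwz : w z = ENNReal.ofReal (R + 1) := rfl
  -- growth comparison
  have hofReal_le : ENNReal.ofReal (R/2 + 1) ≤ w z := by
    rw [hwz]; exact ENNReal.ofReal_le_ofReal (by linarith)
  have hwz_le : w z ≤ 2 * ENNReal.ofReal (R/2 + 1) := by
    rw [hwz]
    calc ENNReal.ofReal (R + 1) ≤ ENNReal.ofReal (2 * (R/2 + 1)) :=
        ENNReal.ofReal_le_ofReal (by linarith)
    _ = 2 * ENNReal.ofReal (R/2 + 1) := by rw [ENNReal.ofReal_mul (by norm_num)]; norm_num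
  -- Piece A
  have boundA : ∑' u, Set.indicator SA f u ≤ (2:ℝ≥0∞)^b * Ca * E := by
    have hpt : ∀ u, Set.indicator SA f u
        ≤ (2:ℝ≥0∞)^b * w z ^ (-b) * Set.indicator SA (fun v => w v ^ (-a)) u := by
      intro u
      by_cases hu : u ∈ SA
      · rw [Set.indicator_of_mem hu, Set.indicator_of_mem hu]
        have hh : w (z - u) ^ (-b) ≤ (2:ℝ≥0∞)^b * w z ^ (-b) := half_bound hu hb.le
        calc f u = w (z - u) ^ (-b) * w u ^ (-a) := mul_comm _ _
        _ ≤ (2:ℝ≥0∞)^b * w z ^ (-b) * w u ^ (-a) := mul_le_mul_left hh _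
      · rw [Set.indicator_of_notMem hu, Set.indicator_of_notMem hu, mul_zero]
    calc ∑' u, Set.indicator SA f u
        ≤ ∑' u, (2:ℝ≥0∞)^b * w z ^ (-b) * Set.indicator SA (fun v => w v ^ (-a)) u :=
          ENNReal.tsum_le_tsum hpt
    _ = (2:ℝ≥0∞)^b * w z ^ (-b) * ∑' u, Set.indicator SA (fun v => w v ^ (-a)) u :=
          ENNReal.tsum_mul_left
    _ ≤ (2:ℝ≥0∞)^b * w z ^ (-b) * (Ca * ENNReal.ofReal (R/2 + 1) ^ ((d:ℝ) - a)) :=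
          mul_le_mul_right (HA (R/2) hR2) _
    _ ≤ (2:ℝ≥0∞)^b * w z ^ (-b) * (Ca * w z ^ ((d:ℝ) - a)) := by
          apply mul_le_mul_right
          exact mul_le_mul_right (ENNReal.rpow_le_rpow hofReal_le (by linarith)) _
    _ = (2:ℝ≥0∞)^b * Ca * (w z ^ (-b) * w z ^ ((d:ℝ) - a)) := by ring
    _ = (2:ℝ≥0∞)^b * Ca * E := by
          rw [w_rpow_mul, hE]; congr 2; ring
  -- Piece B
  have boundB : ∑' u, Set.indicator SB f u ≤ (2:ℝ≥0∞)^a * Cb * E := by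
    have hchg : ∑' u, Set.indicator SB f u = ∑' v, Set.indicator SB f (z - v) :=
      (tsum_sub_left z (Set.indicator SB f)).symm
    rw [hchg]
    have hpt : ∀ v, Set.indicator SB f (z - v)
        ≤ (2:ℝ≥0∞)^a * w z ^ (-a) * Set.indicator {v : V d | znorm v ≤ R/2} (fun v => w v ^ (-b)) v := by
      intro v
      by_cases hv : znorm v ≤ R/2
      · have hmem : (z - v) ∈ SB := by
          show znorm (z - (z - v)) ≤ R/2
          rw [sub_sub_cancel]; exact hv
        rw [Set.indicator_of_mem hmem, Set.indicator_of_mem (show v ∈ {v : V d | znorm v ≤ R/2} from hv)]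
        have hfv : f (z - v) = w (z - v) ^ (-a) * w v ^ (-b) := by
          rw [hf]; simp only []; rw [sub_sub_cancel]
        rw [hfv]
        have hh : w (z - v) ^ (-a) ≤ (2:ℝ≥0∞)^a * w z ^ (-a) := half_bound hv ha.le
        exact mul_le_mul_left hh _
      · have hmem : (z - v) ∉ SB := by
          show ¬ znorm (z - (z - v)) ≤ R/2
          rw [sub_sub_cancel]; exact hv
        rw [Set.indicator_of_notMem hmem]
        exact zero_le
    calc ∑' v, Set.indicator SB f (z - v)
        ≤ ∑' v, (2:ℝ≥0∞)^a * w z ^ (-a) * Set.indicator {v : V d | znorm v ≤ R/2} (fun v => w v ^ (-b)) v :=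
          ENNReal.tsum_le_tsum hpt
    _ = (2:ℝ≥0∞)^a * w z ^ (-a) * ∑' v, Set.indicator {v : V d | znorm v ≤ R/2} (fun v => w v ^ (-b)) v :=
          ENNReal.tsum_mul_left
    _ ≤ (2:ℝ≥0∞)^a * w z ^ (-a) * (Cb * ENNReal.ofReal (R/2 + 1) ^ ((d:ℝ) - b)) :=
          mul_le_mul_right (HB (R/2) hR2) _
    _ ≤ (2:ℝ≥0∞)^a * w z ^ (-a) * (Cb * w z ^ ((d:ℝ) - b)) := by
          apply mul_le_mul_right
          exact mul_le_mul_right (ENNReal.rpow_le_rpow hofReal_le (by linarith)) _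
    _ = (2:ℝ≥0∞)^a * Cb * (w z ^ (-a) * w z ^ ((d:ℝ) - b)) := by ring
    _ = (2:ℝ≥0∞)^a * Cb * E := by
          rw [w_rpow_mul, hE]; congr 2; ring
  -- tail comparison for pieces C
  have htail_cmp : ENNReal.ofReal (R/2 + 1) ^ ((d:ℝ) - (a+b)) ≤ (2:ℝ≥0∞)^(a+b-(d:ℝ)) * E := by
    have h4 : w z / 2 ≤ ENNReal.ofReal (R/2 + 1) :=
      ENNReal.div_le_of_le_mul (by rwa [mul_comm] at hwz_le)
    calc ENNReal.ofReal (R/2 + 1) ^ ((d:ℝ) - (a+b)) ≤ (w z / 2) ^ ((d:ℝ) - (a+b)) :=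
          rpow_anti h4 (by linarith)
    _ = w z ^ ((d:ℝ) - (a+b)) * 2 ^ (-((d:ℝ) - (a+b))) := half_rpow _ (w_ne_top z) _
    _ = (2:ℝ≥0∞)^(a+b-(d:ℝ)) * E := by
          rw [hE]; rw [mul_comm]; congr 2 <;> ring
  -- Piece C1
  have boundC1 : ∑' u, Set.indicator SC1 f u ≤ (2:ℝ≥0∞)^(a+b-(d:ℝ)) * Ct * E := by
    have hpt : ∀ u, Set.indicator SC1 f u ≤ T (z - u) := by
      intro u
      by_cases hu : u ∈ SC1
      · obtain ⟨hu1, hu2⟩ := hu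
        rw [Set.indicator_of_mem (show u ∈ SC1 from ⟨hu1, hu2⟩), hT,
          Set.indicator_of_mem (show (z-u) ∈ {v : V d | R/2 ≤ znorm v} from hu1)]
        have h1 : w u ^ (-a) ≤ w (z - u) ^ (-a) := rpow_anti (w_mono hu2) (by linarith)
        calc f u ≤ w (z - u) ^ (-a) * w (z - u) ^ (-b) := mul_le_mul_left h1 _
        _ = w (z - u) ^ (-(a+b)) := by rw [w_rpow_mul]; congr 1; ring
      · rw [Set.indicator_of_notMem hu]
        exact zero_le
    calc ∑' u, Set.indicator SC1 f u ≤ ∑' u, T (z - u) := ENNReal.tsum_le_tsum hpt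
    _ = ∑' v, T v := tsum_sub_left z T
    _ ≤ Ct * ENNReal.ofReal (R/2 + 1) ^ ((d:ℝ) - (a+b)) := HT (R/2) hR2
    _ ≤ Ct * ((2:ℝ≥0∞)^(a+b-(d:ℝ)) * E) := mul_le_mul_right htail_cmp _
    _ = (2:ℝ≥0∞)^(a+b-(d:ℝ)) * Ct * E := by ring
  -- Piece C2
  have boundC2 : ∑' u, Set.indicator SC2 f u ≤ (2:ℝ≥0∞)^(a+b-(d:ℝ)) * Ct * E := by
    have hpt : ∀ u, Set.indicator SC2 f u ≤ T u := by
      intro u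
      by_cases hu : u ∈ SC2
      · obtain ⟨hu1, hu2⟩ := hu
        rw [Set.indicator_of_mem (show u ∈ SC2 from ⟨hu1, hu2⟩), hT,
          Set.indicator_of_mem (show u ∈ {v : V d | R/2 ≤ znorm v} from hu1)]
        have h1 : w (z - u) ^ (-b) ≤ w u ^ (-b) := rpow_anti (w_mono hu2) (by linarith)
        calc f u ≤ w u ^ (-a) * w u ^ (-b) := mul_le_mul_right h1 _
        _ = w u ^ (-(a+b)) := by rw [w_rpow_mul]; congr 1; ring
      · rw [Set.indicator_of_notMem hu]
        exact zero_le
    calc ∑' u, Set.indicator SC2 f u ≤ ∑' u, T u := ENNReal.tsum_le_tsum hpt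
    _ ≤ Ct * ENNReal.ofReal (R/2 + 1) ^ ((d:ℝ) - (a+b)) := HT (R/2) hR2
    _ ≤ Ct * ((2:ℝ≥0∞)^(a+b-(d:ℝ)) * E) := mul_le_mul_right htail_cmp _
    _ = (2:ℝ≥0∞)^(a+b-(d:ℝ)) * Ct * E := by ring
  calc ∑' u, f u
      ≤ ∑' u, (Set.indicator SA f u + Set.indicator SB f u
          + Set.indicator SC1 f u + Set.indicator SC2 f u) := ENNReal.tsum_le_tsum hcover
  _ = ∑' u, Set.indicator SA f u + ∑' u, Set.indicator SB f u
      + ∑' u, Set.indicator SC1 f u + ∑' u, Set.indicator SC2 f u := by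
      rw [ENNReal.tsum_add, ENNReal.tsum_add, ENNReal.tsum_add]
  _ ≤ (2:ℝ≥0∞)^b * Ca * E + (2:ℝ≥0∞)^a * Cb * E
      + (2:ℝ≥0∞)^(a+b-(d:ℝ)) * Ct * E + (2:ℝ≥0∞)^(a+b-(d:ℝ)) * Ct * E :=
      add_le_add (add_le_add (add_le_add boundA boundB) boundC1) boundC2
  _ = ((2:ℝ≥0∞)^b * Ca + (2:ℝ≥0∞)^a * Cb
      + (2:ℝ≥0∞)^(a+b-(d:ℝ)) * Ct + (2:ℝ≥0∞)^(a+b-(d:ℝ)) * Ct) * E := by ring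

end Aux
theorem stmt6 (d : ℕ) (hd : 1 ≤ d) (q1 q2 : ℝ) (hq2 : 0 < q2) (hq21 : q2 ≤ q1)
    (hq1 : q1 < (d : ℝ)) (hq : 2 * (d : ℝ) < 2 * q1 + q2) :
    ∃ C : ℝ, 0 < C ∧ ∀ x y : V d,
      (∑' uv : V d × V d,
        w (uv.1 - uv.2) ^ (-q1) * w (y - uv.1) ^ (-q2) * w (x - uv.2) ^ (-q1)) ≤
      ENNReal.ofReal C * w (x - y) ^ (-(2 * q1 + q2 - 2 * (d : ℝ))) := by
  have hq1pos : 0 < q1 := lt_of_lt_of_le hq2 hq21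
  have hq12d : (d:ℝ) < q1 + q2 := by linarith
  have hq2d : q2 < (d:ℝ) := lt_of_le_of_lt hq21 hq1
  obtain ⟨C1, hC1, H1⟩ := Aux.conv (d := d) q1 q2 hq1pos hq2 hq1 hq2d hq12d
  obtain ⟨C2, hC2, H2⟩ := Aux.conv (d := d) q1 (q1 + q2 - (d:ℝ)) hq1pos
    (by linarith) hq1 (by linarith) (by linarith)
  refine ⟨(C1 * C2).toReal + 1, by positivity, ?_⟩
  intro x y
  have hCC : C1 * C2 ≤ ENNReal.ofReal ((C1 * C2).toReal + 1) := by
    rw [ENNReal.ofReal_add ENNReal.toReal_nonneg (by norm_num),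
      ENNReal.ofReal_toReal (ENNReal.mul_ne_top hC1 hC2)]
    exact le_self_add
  have key : ∀ v : V d, (∑' u : V d, w (u - v) ^ (-q1) * w (y - u) ^ (-q2))
      ≤ C1 * w (y - v) ^ (-(q1 + q2 - (d:ℝ))) := by
    intro v
    have hchg : (∑' u : V d, w (u - v) ^ (-q1) * w (y - u) ^ (-q2))
        = ∑' t : V d, w t ^ (-q1) * w ((y - v) - t) ^ (-q2) := by
      rw [← (Equiv.addRight v).tsum_eq (fun u => w (u - v) ^ (-q1) * w (y - u) ^ (-q2))]
      apply tsum_congr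
      intro t
      simp only [Equiv.coe_addRight, add_sub_cancel_right, sub_add_eq_sub_sub, sub_right_comm]
    rw [hchg]
    exact H1 (y - v)
  have key2 : (∑' v : V d, w (y - v) ^ (-(q1 + q2 - (d:ℝ))) * w (x - v) ^ (-q1))
      ≤ C2 * w (x - y) ^ (-(q1 + (q1 + q2 - (d:ℝ)) - (d:ℝ))) := by
    have hchg : (∑' v : V d, w (y - v) ^ (-(q1 + q2 - (d:ℝ))) * w (x - v) ^ (-q1))
        = ∑' t : V d, w t ^ (-q1) * w ((x - y) - t) ^ (-(q1 + q2 - (d:ℝ))) := by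
      rw [← Aux.tsum_sub_left x (fun v => w (y - v) ^ (-(q1 + q2 - (d:ℝ))) * w (x - v) ^ (-q1))]
      apply tsum_congr
      intro t
      have h1 : y - (x - t) = -((x - y) - t) := by abel
      have h2 : x - (x - t) = t := by abel
      rw [h1, h2, Aux.w_neg]
      exact mul_comm _ _
    rw [hchg]
    exact H2 (x - y)
  calc (∑' uv : V d × V d,
        w (uv.1 - uv.2) ^ (-q1) * w (y - uv.1) ^ (-q2) * w (x - uv.2) ^ (-q1))
      = ∑' u : V d, ∑' v : V d,
          w (u - v) ^ (-q1) * w (y - u) ^ (-q2) * w (x - v) ^ (-q1) := ENNReal.tsum_prod'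
  _ = ∑' v : V d, ∑' u : V d,
          w (u - v) ^ (-q1) * w (y - u) ^ (-q2) * w (x - v) ^ (-q1) := ENNReal.tsum_comm
  _ = ∑' v : V d, (∑' u : V d, w (u - v) ^ (-q1) * w (y - u) ^ (-q2)) * w (x - v) ^ (-q1) := by
      apply tsum_congr
      intro v
      exact ENNReal.tsum_mul_right
  _ ≤ ∑' v : V d, C1 * (w (y - v) ^ (-(q1 + q2 - (d:ℝ))) * w (x - v) ^ (-q1)) := by
      apply ENNReal.tsum_le_tsum
      intro v
      rw [← mul_assoc]
      exact mul_le_mul_left (key v) _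
  _ = C1 * ∑' v : V d, w (y - v) ^ (-(q1 + q2 - (d:ℝ))) * w (x - v) ^ (-q1) :=
      ENNReal.tsum_mul_left
  _ ≤ C1 * (C2 * w (x - y) ^ (-(q1 + (q1 + q2 - (d:ℝ)) - (d:ℝ)))) := mul_le_mul_right key2 _
  _ = (C1 * C2) * w (x - y) ^ (-(2 * q1 + q2 - 2 * (d:ℝ))) := by
      rw [← mul_assoc]
      congr 2
      ring
  _ ≤ ENNReal.ofReal ((C1 * C2).toReal + 1) * w (x - y) ^ (-(2 * q1 + q2 - 2 * (d:ℝ))) :=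
      mul_le_mul_left hCC _
end

section
/- Let d ≥ 1 and let q satisfy 2d/3 < q < d, and define S̄ := sup_{x,y∈ℤ^d} ∑_{u,v∈ℤ^d} (|u−v|+1)^{−q}(|y−u|+1)^{−q}(|x−v|+1)^{−q}, which is finite. Define H(z,w,x,y) := ∑_{u,v∈ℤ^d} (|z−u|+1)^{−q}(|y−u|+1)^{−q}(|w−v|+1)^{−q}(|x−v|+1)^{−q}(|u−v|+1)^{−q}. Then there is a constant C depending only on d and q such that for all z, w, x, y ∈ ℤ^d, H(z,w,x,y) ≤ C S̄ (|y−z|+1)^{−q}(|x−w|+1)^{−q}. -/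
open scoped BigOperators ENNReal

/-- `S̄ = sup_{x,y} ∑_{u,v} (|u−v|+1)^{−q} (|y−u|+1)^{−q} (|x−v|+1)^{−q}`. -/
noncomputable def Sbar (d : ℕ) (q : ℝ) : ℝ≥0∞ :=
  ⨆ p : V d × V d, ∑' uv : V d × V d,
    w (uv.1 - uv.2) ^ (-q) * w (p.2 - uv.1) ^ (-q) * w (p.1 - uv.2) ^ (-q)

/-- The quantity `H(z,w,x,y)` of Remark 4.2. -/
noncomputable def Hdiag (d : ℕ) (q : ℝ) (z ww x y : V d) : ℝ≥0∞ :=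
  ∑' uv : V d × V d,
    w (z - uv.1) ^ (-q) * w (y - uv.1) ^ (-q) * w (ww - uv.2) ^ (-q) *
      w (x - uv.2) ^ (-q) * w (uv.1 - uv.2) ^ (-q)

/-!
Two pointwise inequalities do the work. By the triangle inequality one of `|z - u|`, `|y - u|`
is at least `|y - z| / 2`, so
`(|z-u|+1)^{-q} (|y-u|+1)^{-q} ≤ 2^q (|y-z|+1)^{-q} ((|z-u|+1)^{-q} + (|y-u|+1)^{-q})`,
and likewise in `v`; expanding bounds `H` by `4^q (|y-z|+1)^{-q} (|x-w|+1)^{-q}` times four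
sums of the shape defining `S̄`. For the finiteness of `S̄`, writing `(PQR)^2 = (PQ)(QR)(RP)` and
comparing with the smallest factor gives
`(PQR)^{-q} ≤ (PQ)^{-3q/2} + (QR)^{-3q/2} + (RP)^{-3q/2}`, and each of the three resulting double
sums is `(∑_x (|x|+1)^{-3q/2})^2` by translation invariance, which is finite since `3q/2 > d`.
-/

namespace ENNReal

lemma rpow_neg_le_rpow_neg {x y : ℝ≥0∞} {t : ℝ} (h : x ≤ y) (ht : 0 ≤ t) :
    y ^ (-t) ≤ x ^ (-t) := by
  rw [rpow_neg, rpow_neg]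
  exact ENNReal.inv_le_inv.mpr (rpow_le_rpow h ht)

lemma rpow_neg_mul_mul_le_of_le {a b c : ℝ≥0∞} {t : ℝ} (ht : 0 ≤ t) (hab : a ≤ b)
    (hac : a ≤ c) : (a * b * c) ^ (-t) ≤ a ^ (-(3 * t)) := by
  have hcube : a ^ 3 ≤ a * b * c := by
    calc a ^ 3 = a * a * a := by ring
      _ ≤ a * b * c := by gcongr
  calc (a * b * c) ^ (-t) ≤ (a ^ 3) ^ (-t) := rpow_neg_le_rpow_neg hcube ht
    _ = a ^ (-(3 * t)) := by rw [← rpow_natCast, ← rpow_mul]; norm_num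

lemma rpow_neg_mul_mul_le_add {t : ℝ} (ht : 0 ≤ t) (a b c : ℝ≥0∞) :
    (a * b * c) ^ (-t) ≤ a ^ (-(3 * t)) + b ^ (-(3 * t)) + c ^ (-(3 * t)) := by
  rcases le_total a b with hab | hba
  · rcases le_total a c with hac | hca
    · exact (rpow_neg_mul_mul_le_of_le ht hab hac).trans (le_add_right (le_add_right le_rfl))
    · rw [show a * b * c = c * a * b by ring]
      exact (rpow_neg_mul_mul_le_of_le ht hca (hca.trans hab)).trans le_add_self
  · rcases le_total b c with hbc | hcb
    · rw [show a * b * c = b * a * c by ring]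
      exact (rpow_neg_mul_mul_le_of_le ht hba hbc).trans (le_add_right le_add_self)
    · rw [show a * b * c = c * a * b by ring]
      exact (rpow_neg_mul_mul_le_of_le ht (hcb.trans hba) hcb).trans le_add_self

lemma rpow_neg_mul_rpow_neg_mul_rpow_neg_le {P Q R : ℝ≥0∞} (hP : P ≠ ⊤) (hQ : Q ≠ ⊤)
    (hR : R ≠ ⊤) {q : ℝ} (hq : 0 ≤ q) :
    P ^ (-q) * Q ^ (-q) * R ^ (-q) ≤
      P ^ (-(3 * q / 2)) * Q ^ (-(3 * q / 2)) + Q ^ (-(3 * q / 2)) * R ^ (-(3 * q / 2)) +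
        R ^ (-(3 * q / 2)) * P ^ (-(3 * q / 2)) := by
  have hsq : (P * Q * R) ^ (-q) = ((P * Q) * (Q * R) * (R * P)) ^ (-(q / 2)) := by
    rw [show (P * Q) * (Q * R) * (R * P) = (P * Q * R) ^ 2 by ring, ← rpow_natCast,
      ← rpow_mul]
    ring_nf
  rw [← mul_rpow_of_ne_top hP hQ, ← mul_rpow_of_ne_top (mul_ne_top hP hQ) hR, hsq,
    ← mul_rpow_of_ne_top hP hQ, ← mul_rpow_of_ne_top hQ hR, ← mul_rpow_of_ne_top hR hP,
    show 3 * q / 2 = 3 * (q / 2) by ring]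
  exact rpow_neg_mul_mul_le_add (by linarith) _ _ _

lemma rpow_neg_le_two_rpow_mul {B D : ℝ≥0∞} (hB : B ≠ ⊤) {q : ℝ} (hq : 0 ≤ q)
    (hD : D ≤ 2 * B) : B ^ (-q) ≤ 2 ^ q * D ^ (-q) := by
  have h2 : (2 : ℝ≥0∞) ^ q * 2 ^ (-q) = 1 := by
    rw [← rpow_add _ _ two_ne_zero ofNat_ne_top, add_neg_cancel, rpow_zero]
  calc B ^ (-q) = 2 ^ q * (2 * B) ^ (-q) := by
        rw [mul_rpow_of_ne_top ofNat_ne_top hB, ← mul_assoc, h2, one_mul]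
    _ ≤ 2 ^ q * D ^ (-q) := mul_le_mul_right (rpow_neg_le_rpow_neg hD hq) _

lemma rpow_neg_mul_rpow_neg_le {A B D : ℝ≥0∞} (hA : A ≠ ⊤) (hB : B ≠ ⊤) {q : ℝ}
    (hq : 0 ≤ q) (hD : D ≤ A + B) :
    A ^ (-q) * B ^ (-q) ≤ 2 ^ q * D ^ (-q) * (A ^ (-q) + B ^ (-q)) := by
  rcases le_total A B with hAB | hBA
  · have := rpow_neg_le_two_rpow_mul hB hq (hD.trans (by rw [two_mul]; gcongr))
    calc A ^ (-q) * B ^ (-q) ≤ 2 ^ q * D ^ (-q) * A ^ (-q) := by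
          rw [mul_comm]; gcongr
      _ ≤ _ := by gcongr; exact le_self_add
  · have := rpow_neg_le_two_rpow_mul hA hq (hD.trans (by rw [two_mul]; gcongr))
    calc A ^ (-q) * B ^ (-q) ≤ 2 ^ q * D ^ (-q) * B ^ (-q) := by gcongr
      _ ≤ _ := by gcongr; exact le_add_self

lemma tsum_fin_pi_prod {α : Type*} (g : α → ℝ≥0∞) :
    ∀ n : ℕ, ∑' x : Fin n → α, ∏ i, g (x i) = (∑' a, g a) ^ n
  | 0 => by simp
  | n + 1 => by
    rw [← (Fin.consEquiv fun _ => α).tsum_eq, ENNReal.tsum_prod', pow_succ',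
      ← tsum_fin_pi_prod g n, ← ENNReal.tsum_mul_right]
    simp [Fin.consEquiv, Fin.prod_univ_succ, ENNReal.tsum_mul_left]

end ENNReal

section

variable {d : ℕ}

def intCastEuclidean : V d →+ EuclideanSpace ℝ (Fin d) :=
  AddMonoidHom.mk' (fun x => WithLp.toLp 2 fun i => (x i : ℝ)) fun a b => by ext i; simp

lemma znorm_eq_norm (x : V d) : znorm x = ‖intCastEuclidean x‖ := by
  simp [znorm, intCastEuclidean, EuclideanSpace.norm_eq]

lemma znorm_nonneg (x : V d) : 0 ≤ znorm x := Real.sqrt_nonneg _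

lemma abs_le_znorm (x : V d) (i : Fin d) : |(x i : ℝ)| ≤ znorm x :=
  Real.abs_le_sqrt (Finset.single_le_sum (f := fun j => ((x j : ℝ)) ^ 2)
    (fun _ _ => sq_nonneg _) (Finset.mem_univ i))

lemma one_le_w (x : V d) : 1 ≤ w x :=
  ENNReal.one_le_ofReal.mpr (by linarith [znorm_nonneg x])

lemma w_ne_top (x : V d) : w x ≠ ⊤ := ENNReal.ofReal_ne_top

lemma w_sub_le_add (z y u : V d) : w (y - z) ≤ w (z - u) + w (y - u) := by
  have htri : znorm (y - z) ≤ znorm (z - u) + znorm (y - u) := by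
    simp only [znorm_eq_norm, map_sub]
    linarith [norm_sub_le_norm_sub_add_norm_sub (intCastEuclidean y) (intCastEuclidean u)
      (intCastEuclidean z), norm_sub_rev (intCastEuclidean u) (intCastEuclidean z)]
  rw [w, w, w, ← ENNReal.ofReal_add (by linarith [znorm_nonneg (z - u)])
    (by linarith [znorm_nonneg (y - u)])]
  exact ENNReal.ofReal_le_ofReal (by linarith)

lemma ofReal_abs_add_one_le_w (x : V d) (i : Fin d) :
    ENNReal.ofReal (|(x i : ℝ)| + 1) ≤ w x :=
  ENNReal.ofReal_le_ofReal (by linarith [abs_le_znorm x i])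

lemma summable_abs_int_add_one_rpow_neg {t : ℝ} (ht : 1 < t) :
    Summable fun m : ℤ => (|(m : ℝ)| + 1) ^ (-t) := by
  refine (Real.summable_abs_int_rpow ht).of_norm_bounded_eventually ?_
  filter_upwards [Filter.eventually_cofinite_ne 0] with m hm
  rw [Real.norm_of_nonneg (by positivity)]
  exact Real.rpow_le_rpow_of_nonpos (abs_pos.mpr (Int.cast_ne_zero.mpr hm)) (by linarith)
    (by linarith)

lemma tsum_ofReal_abs_int_add_one_rpow_neg_ne_top {t : ℝ} (ht : 1 < t) :
    ∑' m : ℤ, ENNReal.ofReal (|(m : ℝ)| + 1) ^ (-t) ≠ ⊤ := by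
  rw [tsum_congr fun m : ℤ => ENNReal.ofReal_rpow_of_pos (by positivity),
    ← ENNReal.ofReal_tsum_of_nonneg (fun _ => by positivity)
    (summable_abs_int_add_one_rpow_neg ht)]
  exact ENNReal.ofReal_ne_top

lemma tsum_w_rpow_neg_ne_top {r : ℝ} (hr : (d : ℝ) < r) : ∑' x : V d, w x ^ (-r) ≠ ⊤ := by
  obtain ⟨t, ht, hdt⟩ : ∃ t : ℝ, 1 < t ∧ d * t ≤ r := by
    rcases Nat.eq_zero_or_pos d with rfl | hd
    · exact ⟨2, one_lt_two, by simpa using hr.le⟩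
    · exact ⟨r / d, (one_lt_div (by positivity)).mpr hr, (mul_div_cancel₀ _ (by positivity)).le⟩
  have hprod : ∀ x : V d, w x ^ (-r) ≤ ∏ i, ENNReal.ofReal (|(x i : ℝ)| + 1) ^ (-t) := fun x =>
    calc w x ^ (-r) ≤ w x ^ (-(d * t)) :=
          ENNReal.rpow_le_rpow_of_exponent_le (one_le_w x) (by linarith)
      _ = ∏ _i : Fin d, w x ^ (-t) := by
          rw [Finset.prod_const, Finset.card_univ, Fintype.card_fin, ← ENNReal.rpow_natCast,
            ← ENNReal.rpow_mul]
          ring_nf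
      _ ≤ _ := Finset.prod_le_prod' fun i _ =>
          ENNReal.rpow_neg_le_rpow_neg (ofReal_abs_add_one_le_w x i) (by linarith)
  refine ne_top_of_le_ne_top ?_ (ENNReal.tsum_le_tsum hprod)
  rw [ENNReal.tsum_fin_pi_prod (fun m : ℤ => ENNReal.ofReal (|(m : ℝ)| + 1) ^ (-t))]
  exact ENNReal.pow_ne_top (tsum_ofReal_abs_int_add_one_rpow_neg_ne_top ht)

lemma Sbar_ne_top {q : ℝ} (hq : 2 * (d : ℝ) / 3 < q) : Sbar d q ≠ ⊤ := by
  have hq0 : 0 ≤ q := by linarith [(by positivity : 0 ≤ 2 * (d : ℝ) / 3)]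
  have hds : (d : ℝ) < 3 * q / 2 := by linarith
  set s := 3 * q / 2
  set Z := ∑' x : V d, w x ^ (-s)
  have hZ : Z ≠ ⊤ := tsum_w_rpow_neg_ne_top hds
  have hleft : ∀ a : V d, ∑' u, w (a - u) ^ (-s) = Z := fun a =>
    (Equiv.subLeft a).tsum_eq fun x => w x ^ (-s)
  have hright : ∀ a : V d, ∑' u, w (u - a) ^ (-s) = Z := fun a =>
    (Equiv.subRight a).tsum_eq fun x => w x ^ (-s)
  have hbound : ∀ p : V d × V d, ∑' uv : V d × V d,
      w (uv.1 - uv.2) ^ (-q) * w (p.2 - uv.1) ^ (-q) * w (p.1 - uv.2) ^ (-q) ≤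
        Z * Z + Z * Z + Z * Z := fun ⟨x, y⟩ =>
    calc _ ≤ ∑' uv : V d × V d,
          (w (uv.1 - uv.2) ^ (-s) * w (y - uv.1) ^ (-s) +
            w (y - uv.1) ^ (-s) * w (x - uv.2) ^ (-s) +
            w (x - uv.2) ^ (-s) * w (uv.1 - uv.2) ^ (-s)) :=
          ENNReal.tsum_le_tsum fun uv => ENNReal.rpow_neg_mul_rpow_neg_mul_rpow_neg_le
            (w_ne_top _) (w_ne_top _) (w_ne_top _) hq0
      _ = Z * Z + Z * Z + Z * Z := by
          rw [ENNReal.tsum_add, ENNReal.tsum_add, ENNReal.tsum_prod', ENNReal.tsum_prod',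
            ENNReal.tsum_prod', ENNReal.tsum_comm (f := fun u v => w (x - v) ^ (-s) * _)]
          simp only [ENNReal.tsum_mul_left, ENNReal.tsum_mul_right, hleft, hright]
  refine ne_top_of_le_ne_top ?_ (iSup_le hbound)
  finiteness

noncomputable def chainSum (d : ℕ) (q : ℝ) (c e : V d) : ℝ≥0∞ :=
  ∑' uv : V d × V d, w (c - uv.1) ^ (-q) * w (e - uv.2) ^ (-q) * w (uv.1 - uv.2) ^ (-q)

lemma chainSum_le_Sbar (q : ℝ) (c e : V d) : chainSum d q c e ≤ Sbar d q :=
  le_iSup_of_le (e, c) (tsum_congr fun _ => by ring).le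

lemma Hdiag_le_chainSum {q : ℝ} (hq : 0 ≤ q) (z ww x y : V d) :
    Hdiag d q z ww x y ≤ 2 ^ q * w (y - z) ^ (-q) * (2 ^ q * w (x - ww) ^ (-q)) *
      (chainSum d q z ww + chainSum d q z x + chainSum d q y ww + chainSum d q y x) := by
  simp only [Hdiag, chainSum]
  rw [← ENNReal.tsum_add, ← ENNReal.tsum_add, ← ENNReal.tsum_add, ← ENNReal.tsum_mul_left]
  refine ENNReal.tsum_le_tsum fun uv => ?_
  have hu := ENNReal.rpow_neg_mul_rpow_neg_le (w_ne_top _) (w_ne_top _) hq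
    (w_sub_le_add z y uv.1)
  have hv := ENNReal.rpow_neg_mul_rpow_neg_le (w_ne_top _) (w_ne_top _) hq
    (w_sub_le_add ww x uv.2)
  calc _ = w (z - uv.1) ^ (-q) * w (y - uv.1) ^ (-q) *
        (w (ww - uv.2) ^ (-q) * w (x - uv.2) ^ (-q)) * w (uv.1 - uv.2) ^ (-q) := by ring
    _ ≤ 2 ^ q * w (y - z) ^ (-q) * (w (z - uv.1) ^ (-q) + w (y - uv.1) ^ (-q)) *
        (2 ^ q * w (x - ww) ^ (-q) * (w (ww - uv.2) ^ (-q) + w (x - uv.2) ^ (-q))) *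
          w (uv.1 - uv.2) ^ (-q) := by gcongr
    _ = _ := by ring

lemma Hdiag_le_Sbar {q : ℝ} (hq : 0 ≤ q) (z ww x y : V d) :
    Hdiag d q z ww x y ≤ 4 * 2 ^ q * 2 ^ q * Sbar d q * (w (y - z) ^ (-q) * w (x - ww) ^ (-q)) :=
  calc Hdiag d q z ww x y
      ≤ 2 ^ q * w (y - z) ^ (-q) * (2 ^ q * w (x - ww) ^ (-q)) *
        (Sbar d q + Sbar d q + Sbar d q + Sbar d q) := by
        grw [Hdiag_le_chainSum hq, chainSum_le_Sbar, chainSum_le_Sbar, chainSum_le_Sbar,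
          chainSum_le_Sbar]
    _ = _ := by ring

end

theorem stmt8_general (d : ℕ) (q : ℝ) (hql : 2 * (d : ℝ) / 3 < q) :
    Sbar d q ≠ ⊤ ∧
    ∃ C : ℝ, 0 < C ∧ ∀ z ww x y : V d,
      Hdiag d q z ww x y ≤ ENNReal.ofReal C * Sbar d q *
        (w (y - z) ^ (-q) * w (x - ww) ^ (-q)) := by
  have hq : 0 ≤ q := by linarith [(by positivity : 0 ≤ 2 * (d : ℝ) / 3)]
  refine ⟨Sbar_ne_top hql, 4 * 2 ^ q * 2 ^ q, by positivity, fun z ww x y => ?_⟩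
  rw [ENNReal.ofReal_mul (by positivity), ENNReal.ofReal_mul (by positivity),
    ← ENNReal.ofReal_rpow_of_pos two_pos]
  simpa using Hdiag_le_Sbar hq z ww x y

theorem stmt8 (d : ℕ) (hd : 1 ≤ d) (q : ℝ) (hql : 2 * (d : ℝ) / 3 < q)
    (hqu : q < (d : ℝ)) :
    Sbar d q ≠ ⊤ ∧
    ∃ C : ℝ, 0 < C ∧ ∀ z ww x y : V d,
      Hdiag d q z ww x y ≤ ENNReal.ofReal C * Sbar d q *
        (w (y - z) ^ (-q) * w (x - ww) ^ (-q)) :=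
  stmt8_general d q hql
end
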